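/- arXiv:2208.05183 — 4 statements merged into one kernel-verified Lean document; each statement's English description precedes it below -/
import Mathlib

section
/- Let n ≥ 2 be a natural number, let R > 0, let p > 1 be a real number, let β > 0 and λ > 0. Let f : ℝ → ℝ be differentiable at R with f(R) > 0, and suppose the radial Robin boundary condition |f'(R)|^(p−2)·f'(R) + β·f(R)^(p−1) = 0 holds. Assume β ≥ ((n−1)/(R(p−1)))^(p−1). Let v : EuclideanSpace ℝ (Fin n) → EuclideanSpace ℝ (Fin n) be a vector field such that x ↦ ⟪v(x), x/R⟫ is integrable on the sphere ∂B(0,R) with respect to the (n−1)-dimensional Hausdorff measure σ, and ∫_{∂B(0,R)} ⟪v(x), x/R⟫ dσ(x) > 0. Then ∫_{∂B(0,R)} ( |f'(R)|^p − λ·f(R)^p + β·f(R)^p·(n−1)/R − p·β²·f(R)^(2p−2)/|f'(R)|^(p−2) )·⟪v(x), x/R⟫ dσ(x) < 0. -/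
open MeasureTheory Metric
open scoped RealInnerProductSpace

/-- Theorem 1.2(i): on the ball `B(0,R) ⊆ ℝⁿ`, if the radial eigenfunction
`u(x) = f(|x|)` satisfies the Robin boundary condition and
`β ≥ ((n-1)/(R(p-1)))^(p-1)`, then for any volume increasing perturbation `v`
(`∫_{∂B} v·η dσ > 0`) the shape derivative
`λ̇₁(0) = ∫_{∂B} (|f'(R)|^p − λ f(R)^p + β f(R)^p (n-1)/R − pβ² f(R)^(2p-2)/|f'(R)|^(p-2)) (v·η) dσ`
is negative.  Here `σ = μH[n-1]` is the `(n-1)`-dimensional Hausdorff measure and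
`η(x) = x/R` is the outward unit normal; all powers are real powers. -/
theorem stmt_0 (n : ℕ) (hn : 2 ≤ n) (R : ℝ) (hR : 0 < R) (p : ℝ) (hp : 1 < p)
    (β lam : ℝ) (hβ : 0 < β) (hlam : 0 < lam)
    (f : ℝ → ℝ) (hf : DifferentiableAt ℝ f R) (hfR : 0 < f R)
    (hbc : |deriv f R| ^ (p - 2) * deriv f R + β * f R ^ (p - 1) = 0)
    (hβ' : β ≥ (((n : ℝ) - 1) / (R * (p - 1))) ^ (p - 1))
    (v : EuclideanSpace ℝ (Fin n) → EuclideanSpace ℝ (Fin n))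
    (hint : IntegrableOn (fun x => ⟪v x, R⁻¹ • x⟫)
      (sphere (0 : EuclideanSpace ℝ (Fin n)) R) (μH[(n : ℝ) - 1]))
    (hpos : 0 < ∫ x in sphere (0 : EuclideanSpace ℝ (Fin n)) R,
      ⟪v x, R⁻¹ • x⟫ ∂(μH[(n : ℝ) - 1])) :
    (∫ x in sphere (0 : EuclideanSpace ℝ (Fin n)) R,
        (|deriv f R| ^ p - lam * f R ^ p + β * f R ^ p * ((n : ℝ) - 1) / R -
          p * β ^ 2 * f R ^ (2 * p - 2) / |deriv f R| ^ (p - 2)) *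
          ⟪v x, R⁻¹ • x⟫ ∂(μH[(n : ℝ) - 1])) < 0 := by
  set C : ℝ := |deriv f R| ^ p - lam * f R ^ p + β * f R ^ p * ((n : ℝ) - 1) / R -
      p * β ^ 2 * f R ^ (2 * p - 2) / |deriv f R| ^ (p - 2) with hC
  rw [integral_const_mul]
  have hF : (0:ℝ) < f R ^ (p - 1) := Real.rpow_pos_of_pos hfR _
  -- the derivative is negative
  have hd : deriv f R < 0 := by
    rcases lt_trichotomy (deriv f R) 0 with h | h | h
    · exact h
    · rw [h] at hbc; simp at hbc
      rcases hbc with h' | h'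
      · exact absurd h' hβ.ne'
      · exact absurd h' hF.ne'
    · exfalso
      have h1 : (0:ℝ) < |deriv f R| ^ (p - 2) :=
        Real.rpow_pos_of_pos (abs_pos.mpr h.ne') _
      nlinarith [mul_pos h1 h, mul_pos hβ hF]
  set a : ℝ := |deriv f R| with ha
  have ha0 : 0 < a := abs_pos.mpr hd.ne
  have hda : deriv f R = -a := by rw [ha, abs_of_neg hd]; ring
  have h2 : a ^ (p - 2) * a = β * f R ^ (p - 1) := by
    rw [hda] at hbc; nlinarith [hbc]
  have key1 : a ^ (p - 1) = β * f R ^ (p - 1) := by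
    have h1 : a ^ (p - 1) = a ^ (p - 2) * a := by
      rw [show p - 1 = p - 2 + 1 by ring]; exact Real.rpow_add_one ha0.ne' _
    rw [h1, h2]
  have key2 : a ^ p = β * f R ^ (p - 1) * a := by
    have h1 : a ^ p = a ^ (p - 1) * a := by
      nth_rewrite 1 [show p = p - 1 + 1 by ring]; exact Real.rpow_add_one ha0.ne' _
    rw [h1, key1]
  have key3 : a ^ (p - 2) = β * f R ^ (p - 1) / a := by
    rw [eq_div_iff ha0.ne', h2]
  have key4 : f R ^ (2 * p - 2) = f R ^ (p - 1) * f R ^ (p - 1) := by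
    rw [show 2 * p - 2 = (p - 1) + (p - 1) by ring]; exact Real.rpow_add hfR _ _
  have key5 : f R ^ p = f R ^ (p - 1) * f R := by
    nth_rewrite 1 [show p = p - 1 + 1 by ring]; exact Real.rpow_add_one hfR.ne' _
  have hp1 : (0:ℝ) < p - 1 := by linarith
  -- lower bound on a
  have hc0 : (0:ℝ) ≤ ((n : ℝ) - 1) / (R * (p - 1)) := by
    apply div_nonneg
    · have : (2:ℝ) ≤ (n:ℝ) := by exact_mod_cast hn
      linarith
    · nlinarith
  have keyA : ((n : ℝ) - 1) / (R * (p - 1)) * f R ≤ a := by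
    rw [← Real.rpow_le_rpow_iff (mul_nonneg hc0 hfR.le) ha0.le hp1,
      Real.mul_rpow hc0 hfR.le, key1]
    exact mul_le_mul_of_nonneg_right hβ' hF.le
  have hCeq : C = β * f R ^ (p - 1) * a - lam * (f R ^ (p - 1) * f R)
      + β * (f R ^ (p - 1) * f R) * ((n : ℝ) - 1) / R
      - p * (β * f R ^ (p - 1) * a) := by
    rw [hC, key2, key3, key4, key5]
    field_simp
  have hCneg : C < 0 := by
    have hmul : ((n : ℝ) - 1) / (R * (p - 1)) * f R * (β * f R ^ (p - 1) * (p - 1))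
        ≤ a * (β * f R ^ (p - 1) * (p - 1)) := by
      apply mul_le_mul_of_nonneg_right keyA
      positivity
    have hfield : ((n : ℝ) - 1) / (R * (p - 1)) * f R * (β * f R ^ (p - 1) * (p - 1))
        = β * (f R ^ (p - 1) * f R) * ((n : ℝ) - 1) / R := by
      field_simp
    have hr : a * (β * f R ^ (p - 1) * (p - 1))
        = p * (β * f R ^ (p - 1) * a) - β * f R ^ (p - 1) * a := by ring
    rw [hfield, hr] at hmul
    have hL : 0 < lam * (f R ^ (p - 1) * f R) := mul_pos hlam (mul_pos hF hfR)
    rw [hCeq]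
    linarith
  exact mul_neg_of_neg_of_pos hCneg hpos
end

section
/- Let n ≥ 2 be a natural number, let R ≥ 1, let p be a real number with p > 1 and p ≥ n, let β ≥ 1 and λ ≥ 0. Let f : ℝ → ℝ be differentiable at R with f(R) > 0, and suppose the radial Robin boundary condition |f'(R)|^(p−2)·f'(R) + β·f(R)^(p−1) = 0 holds. Let v : EuclideanSpace ℝ (Fin n) → EuclideanSpace ℝ (Fin n) be a vector field such that x ↦ ⟪v(x), x/R⟫ is integrable on the sphere ∂B(0,R) with respect to the (n−1)-dimensional Hausdorff measure σ, and ∫_{∂B(0,R)} ⟪v(x), x/R⟫ dσ(x) > 0. Then ∫_{∂B(0,R)} ( |f'(R)|^p − λ·f(R)^p + β·f(R)^p·(n−1)/R − p·β²·f(R)^(2p−2)/|f'(R)|^(p−2) )·⟪v(x), x/R⟫ dσ(x) ≤ 0, with strict inequality if λ > 0. -/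
open MeasureTheory Metric
open scoped RealInnerProductSpace

/-- Theorem 1.2(ii): on the ball `B(0,R) ⊆ ℝⁿ` with `R ≥ 1`, `β ≥ 1`, `p ≥ n`,
if the radial eigenfunction `u(x) = f(|x|)` satisfies the Robin boundary condition,
then for any volume increasing perturbation `v` (`∫_{∂B} v·η dσ > 0`) the shape
derivative
`λ̇₁(0) = ∫_{∂B} (|f'(R)|^p − λ f(R)^p + β f(R)^p (n-1)/R − pβ² f(R)^(2p-2)/|f'(R)|^(p-2)) (v·η) dσ`
is nonpositive, and negative when `λ > 0`.  Here `σ = μH[n-1]` is the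
`(n-1)`-dimensional Hausdorff measure and `η(x) = x/R` is the outward unit normal;
all powers are real powers. -/
theorem stmt_1 (n : ℕ) (hn : 2 ≤ n) (R : ℝ) (hR : 1 ≤ R) (p : ℝ) (hp : 1 < p)
    (hpn : (n : ℝ) ≤ p) (β lam : ℝ) (hβ : 1 ≤ β) (hlam : 0 ≤ lam)
    (f : ℝ → ℝ) (hf : DifferentiableAt ℝ f R) (hfR : 0 < f R)
    (hbc : |deriv f R| ^ (p - 2) * deriv f R + β * f R ^ (p - 1) = 0)
    (v : EuclideanSpace ℝ (Fin n) → EuclideanSpace ℝ (Fin n))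
    (hint : IntegrableOn (fun x => ⟪v x, R⁻¹ • x⟫)
      (sphere (0 : EuclideanSpace ℝ (Fin n)) R) (μH[(n : ℝ) - 1]))
    (hpos : 0 < ∫ x in sphere (0 : EuclideanSpace ℝ (Fin n)) R,
      ⟪v x, R⁻¹ • x⟫ ∂(μH[(n : ℝ) - 1])) :
    (∫ x in sphere (0 : EuclideanSpace ℝ (Fin n)) R,
        (|deriv f R| ^ p - lam * f R ^ p + β * f R ^ p * ((n : ℝ) - 1) / R -
          p * β ^ 2 * f R ^ (2 * p - 2) / |deriv f R| ^ (p - 2)) *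
          ⟪v x, R⁻¹ • x⟫ ∂(μH[(n : ℝ) - 1])) ≤ 0 ∧
      (0 < lam →
        (∫ x in sphere (0 : EuclideanSpace ℝ (Fin n)) R,
          (|deriv f R| ^ p - lam * f R ^ p + β * f R ^ p * ((n : ℝ) - 1) / R -
            p * β ^ 2 * f R ^ (2 * p - 2) / |deriv f R| ^ (p - 2)) *
            ⟪v x, R⁻¹ • x⟫ ∂(μH[(n : ℝ) - 1])) < 0) := by
  have hp1 : (0:ℝ) < p - 1 := by linarith
  have hβ0 : (0:ℝ) < β := by linarith
  set c := f R with hcdef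
  have hcp : (0:ℝ) < c ^ (p-1) := Real.rpow_pos_of_pos hfR _
  have hne : deriv f R ≠ 0 := by
    intro h
    rw [h, mul_zero, zero_add] at hbc
    nlinarith
  have ha0 : 0 < |deriv f R| := abs_pos.mpr hne
  set a := |deriv f R| with hadef
  have hap2 : 0 < a ^ (p-2) := Real.rpow_pos_of_pos ha0 _
  have hneg : deriv f R < 0 := by
    rcases lt_or_gt_of_ne hne with h | h
    · exact h
    · exfalso
      have : a = deriv f R := abs_of_pos h
      nlinarith
  have habs : a = -(deriv f R) := abs_of_neg hneg
  have key : a ^ (p-2) * a = β * c ^ (p-1) := by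
    linear_combination a ^ (p-2) * habs - hbc
  have keyp1 : a ^ (p-1) = β * c ^ (p-1) := by
    have e : a ^ (p-1) = a ^ (p-2) * a := by
      rw [← Real.rpow_add_one ha0.ne']; congr 1; ring
    rw [e, key]
  have keyP : a ^ p = β * c ^ (p-1) * a := by
    have e : a ^ p = a ^ (p-1) * a := by
      rw [← Real.rpow_add_one ha0.ne']; congr 1; ring
    rw [e, keyp1]
  have hc2 : c ^ (2*p-2) = c ^ (p-1) * c ^ (p-1) := by
    rw [show (2*p-2 : ℝ) = (p-1) + (p-1) by ring, Real.rpow_add hfR]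
  have h4 : p * β^2 * c ^ (2*p-2) / a ^ (p-2) = p * β * a * c ^ (p-1) := by
    rw [hc2, div_eq_iff hap2.ne']
    linear_combination (-(p * β * c ^ (p-1))) * key
  have hca : c ≤ a := by
    by_contra h
    push_neg at h
    have h2 : a ^ (p-1) < c ^ (p-1) := Real.rpow_lt_rpow ha0.le h hp1
    nlinarith
  have hcP : c ^ p = c ^ (p-1) * c := by
    rw [← Real.rpow_add_one hfR.ne']; congr 1; ring
  have hn1 : (0:ℝ) ≤ (n:ℝ) - 1 := by
    have : (2:ℝ) ≤ n := by exact_mod_cast hn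
    linarith
  have hdivR : ((n:ℝ)-1)/R ≤ (n:ℝ)-1 := div_le_self hn1 hR
  have h5 : β * c ^ p * ((n:ℝ)-1) / R ≤ (p-1) * β * a * c ^ (p-1) := by
    rw [hcP]
    have e1 : β * (c ^ (p-1) * c) * ((n:ℝ)-1) / R = (β * c ^ (p-1) * c) * (((n:ℝ)-1)/R) := by
      ring
    rw [e1]
    have hb1 : (0:ℝ) < β * c ^ (p-1) * c := by positivity
    calc (β * c ^ (p-1) * c) * (((n:ℝ)-1)/R) ≤ (β * c ^ (p-1) * c) * (p-1) := by
          apply mul_le_mul_of_nonneg_left _ hb1.le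
          linarith
      _ ≤ (p-1) * β * a * c ^ (p-1) := by
          nlinarith [mul_le_mul_of_nonneg_left hca
            (show (0:ℝ) ≤ (p-1) * β * c ^ (p-1) by positivity)]
  have hCle : a ^ p - lam * c ^ p + β * c ^ p * ((n:ℝ)-1) / R -
      p * β^2 * c ^ (2*p-2) / a ^ (p-2) ≤ -(lam * c ^ p) := by
    rw [keyP, h4]
    linarith [h5]
  have hcpP : (0:ℝ) < c ^ p := Real.rpow_pos_of_pos hfR _
  have hC0 : a ^ p - lam * c ^ p + β * c ^ p * ((n:ℝ)-1) / R -
      p * β^2 * c ^ (2*p-2) / a ^ (p-2) ≤ 0 := by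
    linarith [mul_nonneg hlam hcpP.le]
  rw [integral_const_mul]
  constructor
  · exact mul_nonpos_of_nonpos_of_nonneg hC0 hpos.le
  · intro hl
    have hClt : a ^ p - lam * c ^ p + β * c ^ p * ((n:ℝ)-1) / R -
        p * β^2 * c ^ (2*p-2) / a ^ (p-2) < 0 := by
      linarith [mul_pos hl hcpP]
    exact mul_neg_of_neg_of_pos hClt hpos
end

section
/- Let n be a natural number, let p be a nonzero real number, and let M : Matrix (Fin n) (Fin n) ℝ. Define A : ℝ → Matrix (Fin n) (Fin n) ℝ by A(t) = (det(1 + t•M))^(2/p) • ((1 + t•M)⁻¹ * ((1 + t•M)⁻¹)ᵀ), where 1 denotes the identity matrix, the real power is Real.rpow, and ᵀ denotes matrix transpose. Then A(0) = 1 and A has derivative (2/p)·trace(M) • 1 − M − Mᵀ at t = 0. -/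
/-! With `B(t) = (1 + tM)⁻¹`, the matrix `A(t)` is `det(1 + tM)^(2/p) • B(t) B(t)ᵀ`, and
`B(t)ᵀ = (1 + tMᵀ)⁻¹`. Differentiating the inverse at the identity gives `Ḃ(0) = -M`, while
`d/dt det(1 + tM)` at `0` is the linear coefficient `trace M` of the polynomial `det(1 + XM)`.
The product rule in the normed algebra of matrices with the `L∞` operator norm then yields
`Ȧ(0) = (2/p) trace M • 1 - M - Mᵀ`; since derivatives only depend on the topology, this is
also the derivative for the entrywise norm. -/

open scoped Matrix

theorem Matrix.hasDerivAt_det_one_add_smul {𝕜 n : Type*} [NontriviallyNormedField 𝕜] [Fintype n]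
    [DecidableEq n] (M : Matrix n n 𝕜) :
    HasDerivAt (fun t : 𝕜 => (1 + t • M).det) M.trace 0 := by
  have h := Polynomial.hasDerivAt (1 + (Polynomial.X : Polynomial 𝕜) • M.map Polynomial.C).det 0
  rw [Matrix.derivative_det_one_add_X_smul] at h
  convert h using 2 with t
  rw [← Polynomial.coe_evalRingHom, RingHom.map_det]
  congr 1
  ext i j
  by_cases hij : i = j <;> simp [hij, mul_comm t]

theorem hasDerivAt_ringInverse_one_add_smul {𝕜 R : Type*} [NontriviallyNormedField 𝕜]
    [NormedRing R] [HasSummableGeomSeries R] [NormedAlgebra 𝕜 R] (a : R) :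
    HasDerivAt (fun t : 𝕜 => Ring.inverse (1 + t • a)) (-a) 0 := by
  have hline : HasDerivAt (fun t : 𝕜 => 1 + t • a) a 0 := by
    simpa using ((hasDerivAt_id (0 : 𝕜)).smul_const a).const_add 1
  have hinv := hasFDerivAt_ringInverse (𝕜 := 𝕜) (1 : Rˣ)
  simp only [Units.val_one, inv_one] at hinv
  rw [← add_zero (1 : R), ← zero_smul 𝕜 a] at hinv
  simpa [Function.comp_def] using hinv.comp_hasDerivAt (0 : 𝕜) hline

section LinftyOpNorm

attribute [local instance] Matrix.linftyOpNormedRing Matrix.linftyOpNormedAlgebra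

variable {n : Type*} [Fintype n] [DecidableEq n]

theorem Matrix.hasDerivAt_inv_one_add_smul {𝕜 : Type*} [NontriviallyNormedField 𝕜]
    [CompleteSpace 𝕜] (M : Matrix n n 𝕜) :
    HasDerivAt (fun t : 𝕜 => (1 + t • M)⁻¹) (-M) 0 := by
  -- The `L∞` operator norm's uniformity is not reducibly the product uniformity of `Matrix`,
  -- so completeness has to be provided for it explicitly.
  have : @CompleteSpace (Matrix n n 𝕜) PseudoMetricSpace.toUniformSpace :=
    FiniteDimensional.complete 𝕜 _
  have h := hasDerivAt_ringInverse_one_add_smul (𝕜 := 𝕜) M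
  simp only [← Matrix.nonsing_inv_eq_ringInverse] at h
  exact h

theorem Matrix.hasDerivAt_det_rpow_smul_inv_mul_inv_transpose (q : ℝ) (M : Matrix n n ℝ) :
    HasDerivAt (fun t : ℝ => (1 + t • M).det ^ q • ((1 + t • M)⁻¹ * (1 + t • M)⁻¹ᵀ))
      ((q * M.trace) • 1 - M - Mᵀ) 0 := by
  have hdet : HasDerivAt (fun t : ℝ => (1 + t • M).det ^ q) (q * M.trace) 0 := by
    simpa [mul_comm] using (hasDerivAt_det_one_add_smul M).rpow_const (p := q) (by simp)
  have hinvT : HasDerivAt (fun t : ℝ => (1 + t • M)⁻¹ᵀ) (-Mᵀ) 0 := by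
    convert hasDerivAt_inv_one_add_smul Mᵀ using 2 with t
    simp [transpose_nonsing_inv]
  refine (hdet.smul ((hasDerivAt_inv_one_add_smul M).mul hinvT)).congr_deriv ?_
  simp only [zero_smul, add_zero, det_one, Real.one_rpow, inv_one, transpose_one, mul_one,
    mul_neg, one_mul, smul_add, smul_neg, one_smul, Pi.mul_apply]
  module

end LinftyOpNorm

attribute [local instance] Matrix.normedAddCommGroup Matrix.normedSpace

theorem stmt_5_general (n : ℕ) (p : ℝ) (M : Matrix (Fin n) (Fin n) ℝ) :
    (fun t : ℝ => (((1 : Matrix (Fin n) (Fin n) ℝ) + t • M).det ^ (2 / p)) •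
        (((1 : Matrix (Fin n) (Fin n) ℝ) + t • M)⁻¹ *
          (((1 : Matrix (Fin n) (Fin n) ℝ) + t • M)⁻¹)ᵀ)) 0 = 1 ∧
      HasDerivAt
        (fun t : ℝ => (((1 : Matrix (Fin n) (Fin n) ℝ) + t • M).det ^ (2 / p)) •
          (((1 : Matrix (Fin n) (Fin n) ℝ) + t • M)⁻¹ *
            (((1 : Matrix (Fin n) (Fin n) ℝ) + t • M)⁻¹)ᵀ))
        ((2 / p * M.trace) • (1 : Matrix (Fin n) (Fin n) ℝ) - M - Mᵀ) 0 :=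
  ⟨by simp, Matrix.hasDerivAt_det_rpow_smul_inv_mul_inv_transpose (2 / p) M⟩

/-- Lemma 3.1(ii): with `A(t) = (det(I + tM))^(2/p) • ((I + tM)⁻¹ ((I + tM)⁻¹)ᵀ)`,
one has `A(0) = I` and `Ȧ(0) = (2/p)·trace(M) • I − M − Mᵀ`. The power is a real
power (`Real.rpow`). -/
theorem stmt_5 (n : ℕ) (p : ℝ) (hp : p ≠ 0) (M : Matrix (Fin n) (Fin n) ℝ) :
    (fun t : ℝ => (((1 : Matrix (Fin n) (Fin n) ℝ) + t • M).det ^ (2 / p)) •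
        (((1 : Matrix (Fin n) (Fin n) ℝ) + t • M)⁻¹ *
          (((1 : Matrix (Fin n) (Fin n) ℝ) + t • M)⁻¹)ᵀ)) 0 = 1 ∧
      HasDerivAt
        (fun t : ℝ => (((1 : Matrix (Fin n) (Fin n) ℝ) + t • M).det ^ (2 / p)) •
          (((1 : Matrix (Fin n) (Fin n) ℝ) + t • M)⁻¹ *
            (((1 : Matrix (Fin n) (Fin n) ℝ) + t • M)⁻¹)ᵀ))
        ((2 / p * M.trace) • (1 : Matrix (Fin n) (Fin n) ℝ) - M - Mᵀ) 0 :=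
  stmt_5_general n p M
end

section
/- Let n be a natural number, let v : ℝⁿ → ℝⁿ (i.e., EuclideanSpace ℝ (Fin n) → EuclideanSpace ℝ (Fin n)) be continuously differentiable with bounded derivative (hence Lipschitz), and let Ω ⊆ ℝⁿ be a bounded measurable set. For t ∈ ℝ let Ω_t be the image of Ω under the map x ↦ x + t•v(x), and let |Ω_t| denote its Lebesgue measure (as a real number). Then the function t ↦ |Ω_t| has derivative ∫_Ω trace(fderiv ℝ v x) dx at t = 0, where trace(fderiv ℝ v x) is the divergence div v(x). -/
/-!
For small `|t|` the map `x ↦ x + t • v x` is injective (the identity plus a contraction) and its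
Jacobian `det (1 + t • Dv x)` is positive, so by the change of variables formula
`|Ω_t| = ∫_Ω det (1 + t • Dv x) dx`. By Jacobi's formula `t ↦ det (1 + t • A)` has derivative
`trace A` at `0`, and its `t`-derivative is bounded uniformly for `|t| ≤ 1`, `‖A‖ ≤ K` by
compactness of balls in the finite-dimensional space `E →L[ℝ] E`; so one may differentiate under
the integral sign.
-/

open MeasureTheory Filter Topology Metric Set

namespace ContinuousLinearMap

variable {𝕜 E : Type*} [NontriviallyNormedField 𝕜] [NormedAddCommGroup E]
  [NormedSpace 𝕜 E] [FiniteDimensional 𝕜 E]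

theorem contDiff_det [CompleteSpace 𝕜] {n : WithTop ℕ∞} :
    ContDiff 𝕜 n (fun f : E →L[𝕜] E => f.det) := by
  let b := Module.finBasis 𝕜 E
  have h : (fun f : E →L[𝕜] E => f.det) = fun f => ∑ σ : Equiv.Perm (Fin (Module.finrank 𝕜 E)),
      ((Equiv.Perm.sign σ : ℤ) : 𝕜) * ∏ i, b.equivFunL (f (b i)) (σ i) := by
    funext f
    rw [det, ← LinearMap.det_toMatrix b, Matrix.det_apply]
    simp [LinearMap.toMatrix_apply, Units.smul_def]
  rw [h]
  fun_prop

theorem hasDerivAt_det_one_add_smul (A : E →L[𝕜] E) :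
    HasDerivAt (fun t : 𝕜 => (1 + t • A).det) (LinearMap.trace 𝕜 E A) 0 := by
  let b := Module.finBasis 𝕜 E
  set M := LinearMap.toMatrix b b A
  set P := (1 + (Polynomial.X : Polynomial 𝕜) • M.map Polynomial.C).det
  have h : ∀ t : 𝕜, (1 + t • A).det = P.eval t := fun t => by
    rw [det, ← LinearMap.det_toMatrix b]
    simp [P, M, eval_det, ← Matrix.smul_eq_mul_diagonal]
  rw [LinearMap.trace_eq_matrix_trace 𝕜 b, ← Matrix.derivative_det_one_add_X_smul]
  simpa only [h] using P.hasDerivAt 0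

end ContinuousLinearMap

section

variable {E : Type*} [NormedAddCommGroup E] [NormedSpace ℝ E]

theorem LipschitzWith.injective_add_smul {v : E → E} {K : NNReal} (hv : LipschitzWith K v)
    {t : ℝ} (ht : ‖t‖₊ * K < 1) : Function.Injective fun x => x + t • v x :=
  (AntilipschitzWith.id.add_lipschitzWith ((lipschitzWith_smul t).comp hv)
    (by simpa using ht)).injective

variable [FiniteDimensional ℝ E]

theorem continuous_deriv_det_one_add_smul :
    Continuous fun p : (E →L[ℝ] E) × ℝ => deriv (fun s : ℝ => (1 + s • p.1).det) p.2 := by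
  have h : ContDiff ℝ 1
      (Function.uncurry fun (p : (E →L[ℝ] E) × ℝ) (s : ℝ) => (1 + s • p.1).det) :=
    ContinuousLinearMap.contDiff_det.comp (by fun_prop)
  exact (Continuous.fderiv_one h continuous_snd).clm_apply continuous_const

theorem exists_bound_deriv_det_one_add_smul (K : ℝ) :
    ∃ C, ∀ A ∈ closedBall (0 : E →L[ℝ] E) K, ∀ t ∈ closedBall (0 : ℝ) 1,
      ‖deriv (fun s : ℝ => (1 + s • A).det) t‖ ≤ C := by
  obtain ⟨C, hC⟩ := ((isCompact_closedBall (0 : E →L[ℝ] E) K).prod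
    (isCompact_closedBall (0 : ℝ) 1)).exists_bound_of_continuousOn
    continuous_deriv_det_one_add_smul.continuousOn
  exact ⟨C, fun A hA t ht => hC (A, t) ⟨hA, ht⟩⟩

theorem eventually_forall_closedBall_det_one_add_smul_pos (K : ℝ) :
    ∀ᶠ t in 𝓝 (0 : ℝ), ∀ A ∈ closedBall (0 : E →L[ℝ] E) K, 0 < (1 + t • A).det := by
  refine (isCompact_closedBall _ K).eventually_forall_of_forall_eventually fun A _ => ?_
  have h : Continuous fun p : ℝ × (E →L[ℝ] E) => (1 + p.1 • p.2).det :=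
    ContinuousLinearMap.continuous_det.comp (by fun_prop)
  exact h.continuousAt.eventually (lt_mem_nhds (by simp [ContinuousLinearMap.det]))

theorem hasDerivAt_integral_det_one_add_smul {X : Type*} [MeasurableSpace X] {μ : Measure X}
    [IsFiniteMeasure μ] {A : X → E →L[ℝ] E} (hA : Measurable A) {K : ℝ} (hAK : ∀ x, ‖A x‖ ≤ K) :
    HasDerivAt (fun t : ℝ => ∫ x, (1 + t • A x).det ∂μ) (∫ x, LinearMap.trace ℝ E (A x) ∂μ) 0 := by
  obtain ⟨C, hC⟩ := exists_bound_deriv_det_one_add_smul (E := E) K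
  have hdiff (B : E →L[ℝ] E) : Differentiable ℝ fun s : ℝ => (1 + s • B).det :=
    (ContinuousLinearMap.contDiff_det (n := 1)).differentiable one_ne_zero |>.comp (by fun_prop)
  have hmeas (t : ℝ) : Measurable fun x => (1 + t • A x).det :=
    ContinuousLinearMap.continuous_det.measurable.comp (measurable_const.add (hA.const_smul t))
  have key := hasDerivAt_integral_of_dominated_loc_of_deriv_le (μ := μ) (x₀ := 0)
    (F' := fun t x => deriv (fun s : ℝ => (1 + s • A x).det) t) (bound := fun _ => C)
    (closedBall_mem_nhds 0 one_pos) (.of_forall fun t => (hmeas t).aestronglyMeasurable)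
    (by simp)
    (continuous_deriv_det_one_add_smul.measurable.comp
      (hA.prodMk measurable_const)).aestronglyMeasurable
    (.of_forall fun x t ht => hC _ (mem_closedBall_zero_iff.2 (hAK x)) t ht)
    (integrable_const C) (.of_forall fun x t _ => (hdiff (A x) t).hasDerivAt)
  have htrace (x : X) : deriv (fun s : ℝ => (1 + s • A x).det) 0 = LinearMap.trace ℝ E (A x) :=
    (ContinuousLinearMap.hasDerivAt_det_one_add_smul (A x)).deriv
  simpa only [htrace] using key.2

theorem measureReal_image_eq_setIntegral_det [MeasurableSpace E] [BorelSpace E] (μ : Measure E)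
    [μ.IsAddHaarMeasure] {s : Set E} {f : E → E} {f' : E → E →L[ℝ] E} (hs : MeasurableSet s)
    (hf' : ∀ x ∈ s, HasFDerivWithinAt f (f' x) s x) (hf : InjOn f s)
    (hpos : ∀ x ∈ s, 0 < (f' x).det) :
    μ.real (f '' s) = ∫ x in s, (f' x).det ∂μ := by
  have h := integral_image_eq_integral_abs_det_fderiv_smul μ hs hf' hf fun _ => (1 : ℝ)
  rw [setIntegral_const, smul_eq_mul, mul_one] at h
  rw [h]
  exact setIntegral_congr_fun hs fun x hx => by simp [abs_of_pos (hpos x hx)]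

theorem hasDerivAt_measureReal_image_add_smul [MeasurableSpace E] [BorelSpace E] (μ : Measure E)
    [μ.IsAddHaarMeasure] {v : E → E} (hv : Differentiable ℝ v) {K : ℝ}
    (hvK : ∀ x, ‖fderiv ℝ v x‖ ≤ K) {Ω : Set E} (hΩm : MeasurableSet Ω) (hΩ : μ Ω ≠ ⊤) :
    HasDerivAt (fun t : ℝ => μ.real ((fun x => x + t • v x) '' Ω))
      (∫ x in Ω, LinearMap.trace ℝ E (fderiv ℝ v x) ∂μ) 0 := by
  have hlip : LipschitzWith K.toNNReal v :=
    lipschitzWith_of_nnnorm_fderiv_le hv fun x => by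
      simpa [← NNReal.coe_le_coe] using (hvK x).trans (le_max_left K 0)
  have hsmall : ∀ᶠ t : ℝ in 𝓝 0, ‖t‖₊ * K.toNNReal < 1 :=
    ((continuous_nnnorm.mul continuous_const).tendsto' 0 0 (by simp)).eventually_lt_const
      zero_lt_one
  have hvol : ∀ᶠ t in 𝓝 (0 : ℝ),
      μ.real ((fun x => x + t • v x) '' Ω) = ∫ x in Ω, (1 + t • fderiv ℝ v x).det ∂μ := by
    filter_upwards [eventually_forall_closedBall_det_one_add_smul_pos (E := E) K, hsmall]
      with t hpos ht
    exact measureReal_image_eq_setIntegral_det μ hΩm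
      (fun x _ => ((hasFDerivAt_id x).add ((hv x).hasFDerivAt.const_smul t)).hasFDerivWithinAt)
      (hlip.injective_add_smul ht).injOn
      (fun x _ => hpos _ (mem_closedBall_zero_iff.2 (hvK x)))
  have : IsFiniteMeasure (μ.restrict Ω) := ⟨by simpa using hΩ.lt_top⟩
  exact (hasDerivAt_integral_det_one_add_smul (measurable_fderiv ℝ v) hvK).congr_of_eventuallyEq
    hvol

end

/-- First-order volume expansion (Section 2.1): for a `C¹` vector field `v` with
bounded derivative and a bounded measurable set `Ω ⊆ ℝⁿ`, the volume of the
perturbed domain `Ω_t = (id + t v)(Ω)` satisfies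
`d/dt |Ω_t| |_{t=0} = ∫_Ω div v dx`, where `div v(x) = trace(Dv(x))`. -/
theorem stmt_8 (n : ℕ) (v : EuclideanSpace ℝ (Fin n) → EuclideanSpace ℝ (Fin n))
    (hv : ContDiff ℝ 1 v) (K : ℝ) (hvK : ∀ x, ‖fderiv ℝ v x‖ ≤ K)
    (Ω : Set (EuclideanSpace ℝ (Fin n))) (hΩm : MeasurableSet Ω)
    (hΩb : Bornology.IsBounded Ω) :
    HasDerivAt (fun t : ℝ => (volume ((fun x => x + t • v x) '' Ω)).toReal)
      (∫ x in Ω, LinearMap.trace ℝ (EuclideanSpace ℝ (Fin n))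
        (fderiv ℝ v x : EuclideanSpace ℝ (Fin n) →ₗ[ℝ] EuclideanSpace ℝ (Fin n))) 0 :=
  hasDerivAt_measureReal_image_add_smul volume (hv.differentiable one_ne_zero) hvK hΩm
    hΩb.measure_lt_top.ne
end
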